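/- arXiv:2405.16513 — 6 statements merged into one kernel-verified Lean document; each statement's English description precedes it below -/
import Mathlib

section
/- Let K be the regular pentagon with vertices v_k = (cos(2πk/5), sin(2πk/5)) and let T be its rotation by 90°, with vertices w_k = (cos(-π/2 + 2πk/5), sin(-π/2 + 2πk/5)). Then the T°-length of the 2-bounce trajectory along the diagonal from v_0 to v_3, namely h_T(v_3 - v_0) + h_T(v_0 - v_3), equals 2·cos(π/10)·(1 + cos(π/5)). -/
open Real

set_option maxHeartbeats 1000000

noncomputable def vtx (k : ℕ) : ℝ × ℝ :=
  (Real.cos (2*π*k/5), Real.sin (2*π*k/5))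

noncomputable def wtx (k : ℕ) : ℝ × ℝ :=
  (Real.cos (-(π/2) + 2*π*k/5), Real.sin (-(π/2) + 2*π*k/5))

def dot (a b : ℝ × ℝ) : ℝ := a.1 * b.1 + a.2 * b.2

/-- Support function of T, as the max over the vertices. -/
noncomputable def hT (u : ℝ × ℝ) : ℝ :=
  max (dot u (wtx 0)) (max (dot u (wtx 1))
    (max (dot u (wtx 2)) (max (dot u (wtx 3)) (dot u (wtx 4)))))

theorem max5_last {a b c d e : ℝ} (h0 : a ≤ e) (h1 : b ≤ e) (h2 : c ≤ e) (h3 : d ≤ e) :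
    max a (max b (max c (max d e))) = e := by
  rw [max_eq_right h3, max_eq_right h2, max_eq_right h1, max_eq_right h0]

theorem max5_snd {a b c d e : ℝ} (h0 : a ≤ b) (h2 : c ≤ b) (h3 : d ≤ b) (h4 : e ≤ b) :
    max a (max b (max c (max d e))) = b := by
  apply le_antisymm
  · exact max_le h0 (max_le le_rfl (max_le h2 (max_le h3 h4)))
  · exact le_max_of_le_right (le_max_left _ _)

/-- The T°-length of the 2-bounce trajectory along the diagonal from v₀ to v₃. -/
theorem diagonal_length :
    hT (vtx 3 - vtx 0) + hT (vtx 0 - vtx 3)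
      = 2 * Real.cos (π/10) * (1 + Real.cos (π/5)) := by
  have hπ := Real.pi_pos
  have hc : Real.cos (π/5) = (1 + √5) / 4 := Real.cos_pi_div_five
  have h5 : (√5) ^ 2 = 5 := Real.sq_sqrt (by norm_num)
  have h52 : (2:ℝ) ≤ √5 := by nlinarith [Real.sqrt_nonneg 5]
  have hc3 : (3:ℝ)/4 ≤ Real.cos (π/5) := by rw [hc]; linarith
  have hspos : 0 < Real.sin (π/5) :=
    Real.sin_pos_of_pos_of_lt_pi (by positivity) (by linarith)
  have hc4 : 4 * Real.cos (π/5) ^ 2 = 2 * Real.cos (π/5) + 1 := by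
    rw [hc]; linear_combination (1/4) * h5
  -- vertex values
  have v0 : vtx 0 = (1, 0) := by unfold vtx; norm_num
  have v3 : vtx 3 = (-Real.cos (π/5), -Real.sin (π/5)) := by
    unfold vtx
    rw [show (2*π*(3:ℕ)/5 : ℝ) = π/5 + π by push_cast; ring,
        Real.cos_add_pi, Real.sin_add_pi]
  have w0 : wtx 0 = (0, -1) := by unfold wtx; norm_num
  have w1 : wtx 1 = (2*Real.sin (π/5)*Real.cos (π/5), -(2*Real.cos (π/5)^2-1)) := by
    unfold wtx
    rw [show (-(π/2) + 2*π*(1:ℕ)/5 : ℝ) = 2*(π/5) - π/2 by push_cast; ring,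
        Real.cos_sub_pi_div_two, Real.sin_sub_pi_div_two,
        Real.cos_two_mul, Real.sin_two_mul]
  have w2 : wtx 2 = (Real.sin (π/5), Real.cos (π/5)) := by
    unfold wtx
    rw [show (-(π/2) + 2*π*(2:ℕ)/5 : ℝ) = (π - π/5) - π/2 by push_cast; ring,
        Real.cos_sub_pi_div_two, Real.sin_sub_pi_div_two,
        Real.cos_pi_sub, Real.sin_pi_sub]
    norm_num
  have w3 : wtx 3 = (-Real.sin (π/5), Real.cos (π/5)) := by
    unfold wtx
    rw [show (-(π/2) + 2*π*(3:ℕ)/5 : ℝ) = (π/5 + π) - π/2 by push_cast; ring,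
        Real.cos_sub_pi_div_two, Real.sin_sub_pi_div_two,
        Real.cos_add_pi, Real.sin_add_pi]
    norm_num
  have w4 : wtx 4 = (-(2*Real.sin (π/5)*Real.cos (π/5)), -(2*Real.cos (π/5)^2-1)) := by
    unfold wtx
    rw [show (-(π/2) + 2*π*(4:ℕ)/5 : ℝ) = (π/2 - 2*(π/5)) + π by push_cast; ring,
        Real.cos_add_pi, Real.sin_add_pi,
        Real.cos_pi_div_two_sub, Real.sin_pi_div_two_sub,
        Real.cos_two_mul, Real.sin_two_mul]
  have hu : vtx 3 - vtx 0 = (-Real.cos (π/5) - 1, -Real.sin (π/5)) := by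
    rw [v3, v0, Prod.mk_sub_mk]; norm_num
  have hu' : vtx 0 - vtx 3 = (1 + Real.cos (π/5), Real.sin (π/5)) := by
    rw [v3, v0, Prod.mk_sub_mk]; norm_num
  have d0 : dot (vtx 3 - vtx 0) (wtx 0) = Real.sin (π/5) := by
    rw [hu, w0]; unfold dot; ring
  have d1 : dot (vtx 3 - vtx 0) (wtx 1)
      = -(Real.sin (π/5)*(2*Real.cos (π/5)+1)) := by
    rw [hu, w1]; unfold dot; ring
  have d2 : dot (vtx 3 - vtx 0) (wtx 2)
      = -(Real.sin (π/5)*(2*Real.cos (π/5)+1)) := by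
    rw [hu, w2]; unfold dot; ring
  have d3 : dot (vtx 3 - vtx 0) (wtx 3) = Real.sin (π/5) := by
    rw [hu, w3]; unfold dot; ring
  have d4 : dot (vtx 3 - vtx 0) (wtx 4) = 4*Real.sin (π/5)*Real.cos (π/5) := by
    rw [hu, w4]; unfold dot; linear_combination Real.sin (π/5) * hc4
  have b0 : dot (vtx 0 - vtx 3) (wtx 0) = -Real.sin (π/5) := by
    rw [hu', w0]; unfold dot; ring
  have b1 : dot (vtx 0 - vtx 3) (wtx 1)
      = Real.sin (π/5)*(2*Real.cos (π/5)+1) := by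
    rw [hu', w1]; unfold dot; ring
  have b2 : dot (vtx 0 - vtx 3) (wtx 2)
      = Real.sin (π/5)*(2*Real.cos (π/5)+1) := by
    rw [hu', w2]; unfold dot; ring
  have b3 : dot (vtx 0 - vtx 3) (wtx 3) = -Real.sin (π/5) := by
    rw [hu', w3]; unfold dot; ring
  have b4 : dot (vtx 0 - vtx 3) (wtx 4) = -(4*Real.sin (π/5)*Real.cos (π/5)) := by
    rw [hu', w4]; unfold dot; linear_combination (-Real.sin (π/5)) * hc4
  have E1 : hT (vtx 3 - vtx 0) = 4*Real.sin (π/5)*Real.cos (π/5) := by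
    unfold hT
    rw [d0, d1, d2, d3, d4]
    exact max5_last (by nlinarith) (by nlinarith) (by nlinarith) (by nlinarith)
  have E2 : hT (vtx 0 - vtx 3) = Real.sin (π/5)*(2*Real.cos (π/5)+1) := by
    unfold hT
    rw [b0, b1, b2, b3, b4]
    exact max5_snd (by nlinarith) (by nlinarith) (by nlinarith) (by nlinarith)
  have cp10 : Real.cos (π/10) = 2*Real.sin (π/5)*Real.cos (π/5) := by
    rw [show (π/10 : ℝ) = π/2 - 2*(π/5) by ring,
        Real.cos_pi_div_two_sub, Real.sin_two_mul]
  rw [E1, E2, cp10]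
  linear_combination (-(Real.sin (π/5))) * hc4
end

section
/- Let c = 2·cos(π/10)·(1 + cos(π/5)) and A = (5/2)·sin(2π/5). Then c²/(2A²) = (√5 + 3)/5, and in particular c²/(2A²) > 1. -/
open Real

/-- The systolic ratio of the pentagon product equals (√5+3)/5 > 1. -/
theorem systolic_ratio_value :
    (2 * Real.cos (π/10) * (1 + Real.cos (π/5)))^2 / (2 * ((5/2) * Real.sin (2*π/5))^2)
        = (Real.sqrt 5 + 3) / 5 ∧
      (2 * Real.cos (π/10) * (1 + Real.cos (π/5)))^2 / (2 * ((5/2) * Real.sin (2*π/5))^2)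
        > 1 := by
  have hcs : Real.cos (π/10) = Real.sin (2*π/5) := by
    rw [← Real.sin_pi_div_two_sub]
    ring_nf
  have hs : Real.sin (2*π/5) > 0 := by
    apply Real.sin_pos_of_pos_of_lt_pi
    · positivity
    · nlinarith [Real.pi_pos]
  have hc5 : Real.cos (π/5) = (1 + Real.sqrt 5) / 4 := Real.cos_pi_div_five
  have h5 : Real.sqrt 5 ^ 2 = 5 := Real.sq_sqrt (by norm_num)
  have h5lt : Real.sqrt 5 > 2 := by
    nlinarith [Real.sqrt_nonneg 5]
  constructor
  · rw [hcs, hc5]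
    field_simp
    ring_nf
    nlinarith [sq_nonneg (Real.sin (2*π/5))]
  · rw [hcs, hc5]
    rw [gt_iff_lt, lt_div_iff₀ (by positivity)]
    nlinarith [mul_pos hs hs]
end

section
/- With v_k = (cos(2πk/5), sin(2πk/5)) and w_k = (cos(-π/2 + 2πk/5), sin(-π/2 + 2πk/5)), for every λ ∈ [0,1] and every k (indices mod 5), setting q̃ = λ·v_{k+2} + (1-λ)·v_{k+3}, the quantity ⟨v_k - q̃, w_{k+1}⟩ + ⟨q̃ - v_k, w_{k-1}⟩ is independent of λ and equals 2·cos(π/10)·(1 + cos(π/5)). -/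
open Real

lemma dot_vtx_wtx (a b : ℕ) :
    dot (vtx a) (wtx b) = Real.cos (2*π*a/5 + π/2 - 2*π*b/5) := by
  have h : (2*π*a/5 + π/2 - 2*π*b/5 : ℝ) = (2*π*a/5) - (-(π/2) + 2*π*b/5) := by ring
  rw [h, Real.cos_sub]; simp [dot, vtx, wtx]

lemma dot_sub_left (a b c : ℝ × ℝ) : dot (a - b) c = dot a c - dot b c := by
  simp [dot]; ring

lemma dot_add_left (a b c : ℝ × ℝ) : dot (a + b) c = dot a c + dot b c := by
  simp [dot]; ring

lemma dot_smul_left (r : ℝ) (a b : ℝ × ℝ) : dot (r • a) b = r * dot a b := by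
  simp [dot, Prod.smul_fst, Prod.smul_snd, smul_eq_mul]; ring

/-- All 2-bounce trajectories from a vertex to the opposite edge have the same
T°-length (indices mod 5, so k-1 is represented by k+4). -/
theorem two_bounce_length (k : ℕ) (l : ℝ) (hl : l ∈ Set.Icc (0:ℝ) 1) :
    dot (vtx k - (l • vtx (k+2) + (1-l) • vtx (k+3))) (wtx (k+1))
      + dot ((l • vtx (k+2) + (1-l) • vtx (k+3)) - vtx k) (wtx (k+4))
      = 2 * Real.cos (π/10) * (1 + Real.cos (π/5)) := by
  have e1 : dot (vtx k) (wtx (k+1)) = Real.cos (π/10) := by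
    rw [dot_vtx_wtx]; congr 1; push_cast; ring
  have e2 : dot (vtx (k+2)) (wtx (k+1)) = -Real.cos (π/10) := by
    rw [dot_vtx_wtx]
    have h : (2*π*(k+2:ℕ)/5 + π/2 - 2*π*(k+1:ℕ)/5 : ℝ) = π - π/10 := by push_cast; ring
    rw [h, Real.cos_pi_sub]
  have e3 : dot (vtx (k+3)) (wtx (k+1)) = -Real.cos (3*π/10) := by
    rw [dot_vtx_wtx]
    have h : (2*π*(k+3:ℕ)/5 + π/2 - 2*π*(k+1:ℕ)/5 : ℝ) = π + 3*π/10 := by push_cast; ring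
    rw [h, Real.cos_add, Real.cos_pi, Real.sin_pi]; ring
  have e4 : dot (vtx (k+2)) (wtx (k+4)) = Real.cos (3*π/10) := by
    rw [dot_vtx_wtx]
    have h : (2*π*(k+2:ℕ)/5 + π/2 - 2*π*(k+4:ℕ)/5 : ℝ) = -(3*π/10) := by push_cast; ring
    rw [h, Real.cos_neg]
  have e5 : dot (vtx (k+3)) (wtx (k+4)) = Real.cos (π/10) := by
    rw [dot_vtx_wtx]; congr 1; push_cast; ring
  have e6 : dot (vtx k) (wtx (k+4)) = -Real.cos (π/10) := by
    rw [dot_vtx_wtx]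
    have h : (2*π*(k:ℕ)/5 + π/2 - 2*π*(k+4:ℕ)/5 : ℝ) = -(π + π/10) := by push_cast; ring
    rw [h, Real.cos_neg, Real.cos_add, Real.cos_pi, Real.sin_pi]; ring
  have key : Real.cos (3*π/10) + Real.cos (π/10)
      = 2 * Real.cos (π/10) * Real.cos (π/5) := by
    have h1 := Real.cos_add (π/10) (π/5)
    have h2 := Real.cos_sub (π/10) (π/5)
    rw [show (π/10 + π/5 : ℝ) = 3*π/10 by ring] at h1
    rw [show (π/10 - π/5 : ℝ) = -(π/10) by ring, Real.cos_neg] at h2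
    linarith
  rw [dot_sub_left, dot_sub_left, dot_add_left, dot_add_left, dot_smul_left,
    dot_smul_left, dot_smul_left, dot_smul_left, e1, e2, e3, e4, e5, e6]
  linear_combination key
end

section
/- With v_k = (cos(2πk/5), sin(2πk/5)), the 2-point set {v_0, v_3} cannot be translated into the interior of the regular pentagon K = conv{v_0,...,v_4}; i.e., there is no t ∈ ℝ² with v_0 + t and v_3 + t both in int(K). -/
open Real

lemma interior_strict_bound {S : Set (ℝ × ℝ)} {f : ℝ × ℝ → ℝ}
    (hlin : IsLinearMap ℝ f) {M : ℝ} (hMpos : 0 < M) {d : ℝ × ℝ}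
    (hdn : ‖d‖ ≤ 2) (hfd : f d = 2 * M)
    (key : ∀ p ∈ convexHull ℝ S, f p ≤ M ∧ -M ≤ f p) :
    ∀ x ∈ interior (convexHull ℝ S), f x < M ∧ -M < f x := by
  intro x hx
  rw [mem_interior_iff_mem_nhds, Metric.mem_nhds_iff] at hx
  obtain ⟨ε, hε, hball⟩ := hx
  have hmem : ∀ r : ℝ, |r| ≤ ε/4 → x + r • d ∈ convexHull ℝ S := by
    intro r hr
    apply hball
    rw [Metric.mem_ball, dist_eq_norm]
    have h2 : x + r • d - x = r • d := by abel
    rw [h2, norm_smul, Real.norm_eq_abs]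
    calc |r| * ‖d‖ ≤ (ε/4) * 2 := by
          apply mul_le_mul hr hdn (norm_nonneg _) (by linarith)
      _ < ε := by linarith
  have hδ : |ε/4| ≤ ε/4 := by rw [abs_of_pos (by linarith)]
  have hp := (key _ (hmem (ε/4) hδ)).1
  have hneg : |(-(ε/4))| ≤ ε/4 := by rw [abs_neg, abs_of_pos (by linarith)]
  have hm := (key _ (hmem (-(ε/4)) hneg)).2
  have e1 : f (x + (ε/4) • d) = f x + (ε/4) * f d := by
    rw [hlin.map_add, hlin.map_smul]; simp
  have e2 : f (x + (-(ε/4)) • d) = f x - (ε/4) * f d := by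
    rw [hlin.map_add, hlin.map_smul]; simp; ring
  rw [e1, hfd] at hp
  rw [e2, hfd] at hm
  have hprod : 0 < (ε/4) * (2 * M) := by positivity
  constructor <;> linarith

/-- The diagonal pair {v₀, v₃} cannot be translated into the interior of the
regular pentagon. -/
theorem diagonal_cannot_translate :
    ¬ ∃ t : ℝ × ℝ,
        vtx 0 + t ∈ interior (convexHull ℝ {p : ℝ × ℝ | ∃ k < 5, p = vtx k}) ∧
        vtx 3 + t ∈ interior (convexHull ℝ {p : ℝ × ℝ | ∃ k < 5, p = vtx k}) := by
  rintro ⟨t, h0, h3⟩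
  set c := Real.cos (π/5) with hc
  set s := Real.sin (π/5) with hs
  set f : ℝ × ℝ → ℝ := fun p => (-c - 1) * p.1 + (-s) * p.2 with hf
  set M : ℝ := 1 + c with hM
  set S : Set (ℝ × ℝ) := {p : ℝ × ℝ | ∃ k < 5, p = vtx k} with hS
  have hlin : IsLinearMap ℝ f := by
    constructor
    · intro a b; simp [hf, Prod.fst_add, Prod.snd_add]; ring
    · intro a b; simp [hf, Prod.smul_fst, Prod.smul_snd, smul_eq_mul]; ring
  -- trig facts
  have hcpos : 0 < c := Real.cos_pos_of_mem_Ioo ⟨by linarith [pi_pos], by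
    rw [div_lt_div_iff₀ (by norm_num : (0:ℝ) < 5) (by norm_num : (0:ℝ) < 2)]
    linarith [pi_pos]⟩
  have hc1 : c ≤ 1 := Real.cos_le_one _
  have hC2le : Real.cos (2*π/5) ≤ 1 := Real.cos_le_one _
  have hC2ge : -1 ≤ Real.cos (2*π/5) := Real.neg_one_le_cos _
  -- values of f at vertices
  have hv0 : f (vtx 0) = -M := by
    simp [vtx, hf, hM]; ring
  have hv3 : f (vtx 3) = M := by
    have h1 : (2*π*(3:ℕ)/5 : ℝ) = π + π/5 := by push_cast; ring
    have hcc : Real.cos (π + π/5) = -c := by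
      rw [Real.cos_add]; simp [hc]
    have hss : Real.sin (π + π/5) = -s := by
      rw [Real.sin_add]; simp [hs]
    simp only [vtx, hf, h1, hcc, hss]
    have := Real.sin_sq_add_cos_sq (π/5)
    rw [hM]; nlinarith [this]
  have key : convexHull ℝ S ⊆ {p : ℝ × ℝ | f p ≤ M} ∩ {p : ℝ × ℝ | -M ≤ f p} := by
    apply convexHull_min _ ((convex_halfSpace_le hlin M).inter (convex_halfSpace_ge hlin (-M)))
    rintro p ⟨k, hk, rfl⟩
    interval_cases k
    · constructor <;> simp [hv0, hM] <;> linarith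
    · -- k = 1
      have hid : c * Real.cos (2*π*(1:ℕ)/5) + s * Real.sin (2*π*(1:ℕ)/5)
          = Real.cos (π/5 - 2*π*(1:ℕ)/5) := (Real.cos_sub _ _).symm
      have h2 : (π/5 - 2*π*(1:ℕ)/5 : ℝ) = -(π/5) := by push_cast; ring
      rw [h2, Real.cos_neg] at hid
      have hC2 : Real.cos (2*π*(1:ℕ)/5) ≤ 1 := Real.cos_le_one _
      have hC2' : -1 ≤ Real.cos (2*π*(1:ℕ)/5) := Real.neg_one_le_cos _
      constructor <;> simp only [Set.mem_setOf_eq, vtx, hf, hM] <;> nlinarith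
    · -- k = 2 : (cos 4π/5, sin 4π/5) = (-c, s)
      have h1 : (2*π*(2:ℕ)/5 : ℝ) = π - π/5 := by push_cast; ring
      have hcc : Real.cos (π - π/5) = -c := Real.cos_pi_sub _
      have hss : Real.sin (π - π/5) = s := Real.sin_pi_sub _
      have hdb : Real.cos (2*(π/5)) = c^2 - s^2 := Real.cos_two_mul' _
      have h3' : (2*(π/5) : ℝ) = 2*π/5 := by ring
      rw [h3'] at hdb
      constructor <;> simp only [Set.mem_setOf_eq, vtx, hf, hM, h1, hcc, hss] <;> nlinarith
    · constructor <;> simp [hv3, hM] <;> linarith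
    · -- k = 4 : (cos 8π/5, sin 8π/5) = (C2, -S2)
      have h1 : (2*π*(4:ℕ)/5 : ℝ) = 2*π - 2*π/5 := by push_cast; ring
      have hcc : Real.cos (2*π - 2*π/5) = Real.cos (2*π/5) := by
        rw [Real.cos_sub]; simp
      have hss : Real.sin (2*π - 2*π/5) = -Real.sin (2*π/5) := by
        rw [Real.sin_sub]; simp
      have hid : c * Real.cos (2*π/5) - s * Real.sin (2*π/5)
          = Real.cos (π/5 + 2*π/5) := (Real.cos_add _ _).symm
      have h2 : (π/5 + 2*π/5 : ℝ) = π - 2*π/5 := by ring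
      rw [h2, Real.cos_pi_sub] at hid
      constructor <;> simp only [Set.mem_setOf_eq, vtx, hf, hM, h1, hcc, hss] <;> nlinarith
  -- d := vtx 3 - vtx 0, f d = 2M
  set d : ℝ × ℝ := vtx 3 - vtx 0 with hd
  have hsub : ∀ a b : ℝ × ℝ, f (a - b) = f a - f b := by
    intro a b; simp [hf, Prod.fst_sub, Prod.snd_sub]; ring
  have hadd : ∀ a b : ℝ × ℝ, f (a + b) = f a + f b := hlin.map_add
  have hfd : f d = 2 * M := by rw [hd, hsub, hv3, hv0]; ring
  have hMpos : 0 < M := by rw [hM]; linarith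
  have hdn : ‖d‖ ≤ 2 := by
    have h1 : ∀ k : ℕ, ‖vtx k‖ ≤ 1 := by
      intro k
      rw [vtx, Prod.norm_def]
      exact max_le (by rw [Real.norm_eq_abs]; exact Real.abs_cos_le_one _)
        (by rw [Real.norm_eq_abs]; exact Real.abs_sin_le_one _)
    calc ‖d‖ ≤ ‖vtx 3‖ + ‖vtx 0‖ := norm_sub_le _ _
      _ ≤ 2 := by linarith [h1 3, h1 0]
  have hint := interior_strict_bound hlin hMpos hdn hfd
    (fun p hp => ⟨(key hp).1, (key hp).2⟩)
  have H0 := (hint _ h0).2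
  have H3 := (hint _ h3).1
  have e3 : f (vtx 3 + t) = f (vtx 0 + t) + 2 * M := by
    rw [hadd, hadd, hv3, hv0]; ring
  linarith
end

section
/- For convex domains X₁, Y₁ ⊂ ℝ^m and X₂, Y₂ ⊂ ℝ^n containing the origin, Vol(X₁ ⊗₁ X₂) = (m! n!/(m+n)!) · Vol(X₁) · Vol(X₂), and Vol(Y₁ ⊗_∞ Y₂) = Vol(Y₁) · Vol(Y₂). -/
open MeasureTheory Pointwise

open Set in
/-- scaling a convex set containing `0` is monotone in the (nonnegative) scale factor -/
lemma aux_smul_subset {E : Type*} [AddCommGroup E] [Module ℝ E]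
    {K : Set E} (hK : Convex ℝ K) (h0 : (0:E) ∈ K)
    {a b : ℝ} (ha : 0 ≤ a) (hab : a ≤ b) : a • K ⊆ b • K := by
  rintro x ⟨y, hy, rfl⟩
  rcases eq_or_lt_of_le (ha.trans hab) with hb | hb
  · have ha0 : a = 0 := le_antisymm (hab.trans hb.symm.le) ha
    exact ⟨0, h0, by simp [ha0, ← hb]⟩
  · refine ⟨(a/b) • y, hK.smul_mem_of_zero_mem h0 hy
      ⟨div_nonneg ha hb.le, div_le_one_of_le₀ hab hb.le⟩, ?_⟩
    show b • ((a/b) • y) = a • y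
    rw [smul_smul, mul_div_cancel₀ _ hb.ne']

open Set in
lemma aux_comb {E : Type*} [AddCommGroup E] [Module ℝ E] {S : Set E} (hS : Convex ℝ S)
    {c d a b : ℝ} (hc : 0 ≤ c) (hd : 0 ≤ d) (ha : 0 ≤ a) (hb : 0 ≤ b)
    {x y : E} (hx : x ∈ c • S) (hy : y ∈ d • S) :
    a • x + b • y ∈ (a*c + b*d) • S := by
  obtain ⟨z, hz, rfl⟩ := hx
  obtain ⟨w, hw, rfl⟩ := hy
  set e := a*c + b*d with he
  rcases eq_or_lt_of_le (by positivity : (0:ℝ) ≤ e) with h0 | h0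
  · have h1 : a * c = 0 := by nlinarith
    have h2 : b * d = 0 := by nlinarith
    refine ⟨z, hz, ?_⟩
    rw [smul_smul, smul_smul, h1, h2, ← h0]
    simp
  · refine ⟨(a*c/e) • z + (b*d/e) • w, hS hz hw (by positivity) (by positivity)
      (by field_simp; exact he.symm), ?_⟩
    show e • ((a*c/e) • z + (b*d/e) • w) = a • c • z + b • d • w
    rw [smul_add, smul_smul, smul_smul, smul_smul, smul_smul]
    congr 2 <;> field_simp

open Set in
/-- the 1-product of two convex sets containing `0` is convex. -/
lemma aux_convex {E F : Type*} [AddCommGroup E] [Module ℝ E] [AddCommGroup F] [Module ℝ F]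
    {S : Set E} {T : Set F} (hS : Convex ℝ S) (hT : Convex ℝ T)
    (hS0 : (0:E) ∈ S) (hT0 : (0:F) ∈ T) :
    Convex ℝ (⋃ t ∈ Set.Icc (0:ℝ) 1, ((1-t) • S) ×ˢ (t • T)) := by
  rintro ⟨x₁, x₂⟩ hx ⟨y₁, y₂⟩ hy a b ha hb hab
  simp only [mem_iUnion, mem_prod] at hx hy ⊢
  obtain ⟨t, ⟨ht0, ht1⟩, hx1, hx2⟩ := hx
  obtain ⟨s, ⟨hs0, hs1⟩, hy1, hy2⟩ := hy
  refine ⟨a*t + b*s, ⟨by positivity, by nlinarith⟩, ?_, ?_⟩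
  · have := aux_comb hS (by linarith : (0:ℝ) ≤ 1 - t) (by linarith : (0:ℝ) ≤ 1 - s)
      ha hb hx1 hy1
    have heq : a*(1-t) + b*(1-s) = 1 - (a*t + b*s) := by nlinarith
    rwa [heq] at this
  · exact aux_comb hT ht0 hs0 ha hb hx2 hy2

open Set in
/-- The measure of the closure of a convex set equals the measure of the set. -/
lemma aux_vol_closure {E : Type*} [NormedAddCommGroup E] [NormedSpace ℝ E]
    [MeasurableSpace E] [BorelSpace E] [FiniteDimensional ℝ E]
    (μ : Measure E) [μ.IsAddHaarMeasure] {K : Set E} (hK : Convex ℝ K) :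
    μ (closure K) = μ K := by
  refine le_antisymm ?_ (measure_mono subset_closure)
  have h1 : closure K ⊆ interior K ∪ frontier K := by
    intro x hx
    by_cases h : x ∈ interior K
    · exact Or.inl h
    · exact Or.inr ⟨hx, h⟩
  calc μ (closure K) ≤ μ (interior K) + μ (frontier K) :=
        le_trans (measure_mono h1) (measure_union_le _ _)
    _ = μ (interior K) := by rw [hK.addHaar_frontier μ, add_zero]
    _ ≤ μ K := measure_mono interior_subset

/-- The product formula (the `p = ∞` case). -/
lemma aux_vol_prod {m n : ℕ} (S : Set (EuclideanSpace ℝ (Fin m)))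
    (T : Set (EuclideanSpace ℝ (Fin n))) :
    volume (S ×ˢ T) = volume S * volume T := by
  rw [MeasureTheory.Measure.volume_eq_prod, MeasureTheory.Measure.prod_prod]

open Set in
/-- The Euler beta integral with natural exponents. -/
lemma aux_beta (a b : ℕ) :
    ∫ x in (0:ℝ)..1, x^a * (1-x)^b
      = (a.factorial * b.factorial : ℝ) / (a+b+1).factorial := by
  induction b generalizing a with
  | zero =>
    rw [Nat.add_zero, Nat.factorial_succ, Nat.factorial_zero]
    simp only [pow_zero, mul_one, integral_pow, one_pow]
    rw [zero_pow (Nat.succ_ne_zero a), sub_zero]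
    have h1 : (a.factorial:ℝ) ≠ 0 := by exact_mod_cast a.factorial_ne_zero
    push_cast
    field_simp
  | succ b ih =>
    have hu : ∀ x ∈ Set.uIcc (0:ℝ) 1, HasDerivAt (fun x : ℝ => (1-x)^(b+1))
        (-((b+1) * (1-x)^b)) x := by
      intro x _
      have h : HasDerivAt (fun x : ℝ => 1 - x) (-1) x := by
        simpa using (hasDerivAt_id x).const_sub 1
      have := h.fun_pow (b+1)
      simpa [mul_comm] using this
    have hv : ∀ x ∈ Set.uIcc (0:ℝ) 1, HasDerivAt (fun x : ℝ => x^(a+1)/(a+1))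
        (x^a) x := by
      intro x _
      have := (hasDerivAt_pow (a+1) x).div_const (a+1)
      refine this.congr_deriv ?_
      push_cast
      field_simp
    have key := intervalIntegral.integral_mul_deriv_eq_deriv_mul hu hv
      (((continuous_const.mul ((continuous_const.sub continuous_id).pow b)).neg).intervalIntegrable 0 1)
      ((continuous_pow a).intervalIntegrable 0 1)
    have h1 : ∫ x in (0:ℝ)..1, x^a * (1-x)^(b+1)
        = ∫ x in (0:ℝ)..1, (1-x)^(b+1) * x^a := by
      congr 1; ext x; ring
    rw [h1, key]
    have h2 : ∫ x in (0:ℝ)..1, -((b+1) * (1-x)^b) * (x^(a+1)/(a+1))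
        = (-((b+1)/(a+1))) * ∫ x in (0:ℝ)..1, x^(a+1) * (1-x)^b := by
      rw [← intervalIntegral.integral_const_mul]
      congr 1; ext x; field_simp
    rw [h2, ih]
    have hfa : ((a+1).factorial : ℝ) = (a+1) * a.factorial := by
      rw [Nat.factorial_succ]; push_cast; ring
    have hfb : ((b+1).factorial : ℝ) = (b+1) * b.factorial := by
      rw [Nat.factorial_succ]; push_cast; ring
    have harith : (a + 1 + b + 1) = (a + (b+1) + 1) := by omega
    rw [harith] at *
    simp only [sub_self, zero_pow (Nat.succ_ne_zero b), pow_succ]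
    have ha1 : ((a:ℝ)+1) ≠ 0 := by positivity
    have hfac : ((a + (b+1) + 1).factorial : ℝ) ≠ 0 := by
      exact_mod_cast Nat.factorial_ne_zero _
    field_simp [hfa, hfb]
    rw [hfa, hfb]; ring


open Set Filter in
set_option maxHeartbeats 1000000 in
lemma aux_main {m n : ℕ} (hm : 0 < m)
    (X₁ : Set (EuclideanSpace ℝ (Fin m))) (X₂ : Set (EuclideanSpace ℝ (Fin n)))
    (hX₁ : Convex ℝ X₁) (hX₂ : Convex ℝ X₂)
    (hX₁b : Bornology.IsBounded X₁) (hX₂b : Bornology.IsBounded X₂)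
    (hX₁0 : 0 ∈ X₁) (hX₂0 : 0 ∈ X₂) :
    volume (⋃ t ∈ Set.Icc (0:ℝ) 1, ((1-t) • X₁) ×ˢ (t • X₂))
      = ENNReal.ofReal ((m.factorial * n.factorial : ℝ) / (m+n).factorial)
          * volume X₁ * volume X₂ := by
  classical
  set K₁ := closure X₁ with hK₁def
  set K₂ := closure X₂ with hK₂def
  have hK₁conv : Convex ℝ K₁ := hX₁.closure
  have hK₂conv : Convex ℝ K₂ := hX₂.closure
  have hK₁0 : (0 : EuclideanSpace ℝ (Fin m)) ∈ K₁ := subset_closure hX₁0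
  have hK₂0 : (0 : EuclideanSpace ℝ (Fin n)) ∈ K₂ := subset_closure hX₂0
  have hK₁c : IsCompact K₁ := hX₁b.isCompact_closure
  have hK₂c : IsCompact K₂ := hX₂b.isCompact_closure
  set A := ⋃ t ∈ Set.Icc (0:ℝ) 1, ((1-t) • X₁) ×ˢ (t • X₂) with hAdef
  set C := ⋃ t ∈ Set.Icc (0:ℝ) 1, ((1-t) • K₁) ×ˢ (t • K₂) with hCdef
  -- the union as a continuous image
  have himg : ∀ (S : Set (EuclideanSpace ℝ (Fin m))) (T : Set (EuclideanSpace ℝ (Fin n))),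
      (fun p : ℝ × (EuclideanSpace ℝ (Fin m) × EuclideanSpace ℝ (Fin n)) =>
        ((1 - p.1) • p.2.1, p.1 • p.2.2)) '' (Set.Icc (0:ℝ) 1 ×ˢ (S ×ˢ T))
      = ⋃ t ∈ Set.Icc (0:ℝ) 1, ((1-t) • S) ×ˢ (t • T) := by
    intro S T
    ext ⟨x, y⟩
    simp only [Set.mem_image, Set.mem_iUnion, Set.mem_prod, Prod.exists, exists_prop]
    constructor
    · rintro ⟨t, p, q, ⟨ht, hp, hq⟩, heq⟩
      obtain ⟨h1, h2⟩ := Prod.mk.injEq .. ▸ heq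
      exact ⟨t, ht, ⟨p, hp, h1⟩, ⟨q, hq, h2⟩⟩
    · rintro ⟨t, ht, ⟨p, hp, h1⟩, ⟨q, hq, h2⟩⟩
      exact ⟨t, p, q, ⟨ht, hp, hq⟩, by rw [← h1, ← h2]⟩
  have hcont : Continuous (fun p : ℝ × (EuclideanSpace ℝ (Fin m) × EuclideanSpace ℝ (Fin n)) =>
      ((1 - p.1) • p.2.1, p.1 • p.2.2)) := by fun_prop
  have hCcomp : IsCompact C := by
    rw [hCdef, ← himg K₁ K₂]
    exact ((isCompact_Icc).prod (hK₁c.prod hK₂c)).image hcont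
  have hAC : A ⊆ C :=
    Set.iUnion₂_mono fun t ht =>
      Set.prod_mono (Set.smul_set_mono subset_closure) (Set.smul_set_mono subset_closure)
  have hCA : C ⊆ closure A := by
    rw [hCdef, ← himg K₁ K₂, hAdef, ← himg X₁ X₂]
    have h1 : Set.Icc (0:ℝ) 1 ×ˢ (K₁ ×ˢ K₂) ⊆ closure (Set.Icc (0:ℝ) 1 ×ˢ (X₁ ×ˢ X₂)) := by
      rw [closure_prod_eq, closure_prod_eq]
      exact Set.prod_mono subset_closure Set.Subset.rfl
    exact (Set.image_mono h1).trans (image_closure_subset_closure_image hcont)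
  have hAconv : Convex ℝ A := aux_convex hX₁ hX₂ hX₁0 hX₂0
  haveI hHaarProd : (volume : Measure (EuclideanSpace ℝ (Fin m) × EuclideanSpace ℝ (Fin n))).IsAddHaarMeasure := by
    rw [MeasureTheory.Measure.volume_eq_prod]
    exact MeasureTheory.Measure.prod.instIsAddHaarMeasure _ _
  have hvolAC : volume A = volume C := by
    refine le_antisymm (measure_mono hAC) ?_
    calc volume C ≤ volume (closure A) := measure_mono hCA
      _ = volume A := aux_vol_closure volume hAconv
  -- the "gauge" of K₂
  set T : EuclideanSpace ℝ (Fin n) → Set ℝ :=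
    fun y => {t | t ∈ Set.Icc (0:ℝ) 1 ∧ y ∈ t • K₂} with hTdef
  set τ : EuclideanSpace ℝ (Fin n) → ℝ := fun y => sInf (T y) with hτdef
  have hmemK₂ : ∀ {t : ℝ} {y}, t ∈ Set.Icc (0:ℝ) 1 → y ∈ t • K₂ → y ∈ K₂ := by
    rintro t y ht ⟨z, hz, rfl⟩
    exact hK₂conv.smul_mem_of_zero_mem hK₂0 hz ht
  have hTclosed : ∀ y, IsClosed (T y) := by
    intro y
    have hD : IsCompact ((fun p : ℝ × EuclideanSpace ℝ (Fin n) => (p.1, p.1 • p.2)) ''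
        (Set.Icc (0:ℝ) 1 ×ˢ K₂)) :=
      (isCompact_Icc.prod hK₂c).image (by fun_prop)
    have hTy : T y = (fun t => (t, y)) ⁻¹' ((fun p : ℝ × EuclideanSpace ℝ (Fin n) =>
        (p.1, p.1 • p.2)) '' (Set.Icc (0:ℝ) 1 ×ˢ K₂)) := by
      ext t
      simp only [hTdef, Set.mem_setOf_eq, Set.mem_preimage, Set.mem_image, Set.mem_prod,
        Prod.exists, Prod.mk.injEq]
      constructor
      · rintro ⟨ht, z, hz, hzy⟩
        exact ⟨t, z, ⟨ht, hz⟩, rfl, hzy⟩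
      · rintro ⟨s, z, ⟨hs, hz⟩, rfl, hzy⟩
        exact ⟨hs, z, hz, hzy⟩
    rw [hTy]
    exact hD.isClosed.preimage (continuous_id.prodMk continuous_const)
  have hT1 : ∀ y ∈ K₂, (1:ℝ) ∈ T y := fun y hy =>
    ⟨⟨zero_le_one, le_refl 1⟩, ⟨y, hy, one_smul ℝ y⟩⟩
  have hTbdd : ∀ y, BddBelow (T y) := fun y => ⟨0, fun t ht => ht.1.1⟩
  have hτmem : ∀ y ∈ K₂, τ y ∈ T y := fun y hy =>
    (hTclosed y).csInf_mem ⟨1, hT1 y hy⟩ (hTbdd y)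
  have hτle : ∀ y, ∀ t ∈ T y, τ y ≤ t := fun y t ht => csInf_le (hTbdd y) ht
  have hτnn : ∀ y ∈ K₂, 0 ≤ τ y := fun y hy => (hτmem y hy).1.1
  have hτ1 : ∀ y ∈ K₂, τ y ≤ 1 := fun y hy => hτle y 1 (hT1 y hy)
  have hτ_out : ∀ y, y ∉ K₂ → τ y = 0 := by
    intro y hy
    have hTe : T y = ∅ := by
      ext t
      simp only [Set.mem_empty_iff_false, iff_false, hTdef, Set.mem_setOf_eq, not_and]
      exact fun ht hyt => absurd (hmemK₂ ht hyt) hy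
    rw [hτdef]
    simp only [hTe, Real.sInf_empty]
  have hτnn' : ∀ y, 0 ≤ τ y := by
    intro y
    by_cases hy : y ∈ K₂
    · exact hτnn y hy
    · rw [hτ_out y hy]
  -- the slices of C
  have hslice : ∀ y : EuclideanSpace ℝ (Fin n),
      (fun x => (x, y)) ⁻¹' C = if y ∈ K₂ then (1 - τ y) • K₁ else ∅ := by
    intro y
    by_cases hy : y ∈ K₂
    · rw [if_pos hy]
      ext x
      simp only [Set.mem_preimage, hCdef, Set.mem_iUnion, Set.mem_prod, exists_prop]
      constructor
      · rintro ⟨t, ht, hx, hyt⟩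
        exact aux_smul_subset hK₁conv hK₁0 (by linarith [ht.2] : (0:ℝ) ≤ 1 - t)
          (by have := hτle y t ⟨ht, hyt⟩; linarith) hx
      · intro hx
        exact ⟨τ y, (hτmem y hy).1, hx, (hτmem y hy).2⟩
    · rw [if_neg hy]
      ext x
      simp only [Set.mem_preimage, hCdef, Set.mem_iUnion, Set.mem_prod, exists_prop,
        Set.mem_empty_iff_false, iff_false, not_exists]
      rintro t ⟨ht, _, hyt⟩
      exact hy (hmemK₂ ht hyt)
  -- volume facts
  have hvolK₁ : volume K₁ = volume X₁ := aux_vol_closure volume hX₁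
  have hvolK₂ : volume K₂ = volume X₂ := aux_vol_closure volume hX₂
  have hv₁top : volume X₁ ≠ ⊤ := by rw [← hvolK₁]; exact hK₁c.measure_lt_top.ne
  have hv₂top : volume X₂ ≠ ⊤ := by rw [← hvolK₂]; exact hK₂c.measure_lt_top.ne
  -- level sets of τ
  have hlevel_le : ∀ {c : ℝ}, 0 ≤ c → c ≤ 1 → {y | y ∈ K₂ ∧ τ y ≤ c} = c • K₂ := by
    intro c hc0 hc1
    ext y
    simp only [Set.mem_setOf_eq]
    constructor
    · rintro ⟨hy, hτc⟩
      exact aux_smul_subset hK₂conv hK₂0 (hτnn y hy) hτc (hτmem y hy).2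
    · intro hy
      have hyK : y ∈ K₂ := hmemK₂ ⟨hc0, hc1⟩ hy
      exact ⟨hyK, hτle y c ⟨⟨hc0, hc1⟩, hy⟩⟩
  have hsmulcomp : ∀ c : ℝ, IsCompact (c • K₂) := by
    intro c
    rw [← Set.image_smul]
    exact hK₂c.image (continuous_const_smul c)
  have hτmeas : Measurable τ := by
    apply measurable_of_Iic
    intro r
    rcases lt_or_ge r 0 with hr | hr
    · have hEq : τ ⁻¹' Set.Iic r = ∅ := by
        ext y
        simp only [Set.mem_preimage, Set.mem_Iic, Set.mem_empty_iff_false, iff_false, not_le]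
        exact lt_of_lt_of_le hr (hτnn' y)
      rw [hEq]; exact MeasurableSet.empty
    · have hEq : τ ⁻¹' Set.Iic r = K₂ᶜ ∪ (min r 1) • K₂ := by
        have h1 : {y | y ∈ K₂ ∧ τ y ≤ min r 1} = (min r 1) • K₂ :=
          hlevel_le (le_min hr zero_le_one) (min_le_right r 1)
        ext y
        simp only [Set.mem_preimage, Set.mem_Iic, Set.mem_union, Set.mem_compl_iff]
        constructor
        · intro hy
          by_cases hyK : y ∈ K₂
          · right; rw [← h1]; exact ⟨hyK, le_min hy (hτ1 y hyK)⟩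
          · left; exact hyK
        · rintro (hy | hy)
          · rw [hτ_out y hy]; exact hr
          · rw [← h1] at hy; exact hy.2.trans (min_le_left r 1)
      rw [hEq]
      exact (hK₂c.isClosed.measurableSet.compl).union (hsmulcomp _).isClosed.measurableSet
  -- the function f
  set f : EuclideanSpace ℝ (Fin n) → ℝ := K₂.indicator (fun y => 1 - τ y) with hfdef
  have hfnn : ∀ y, 0 ≤ f y := by
    intro y
    by_cases hy : y ∈ K₂
    · rw [hfdef, Set.indicator_of_mem hy]; linarith [hτ1 y hy]
    · rw [hfdef, Set.indicator_of_notMem hy]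
  have hfle1 : ∀ y, f y ≤ 1 := by
    intro y
    by_cases hy : y ∈ K₂
    · rw [hfdef, Set.indicator_of_mem hy]; linarith [hτnn y hy]
    · rw [hfdef, Set.indicator_of_notMem hy]; norm_num
  have hfmeas : Measurable f :=
    (measurable_const.sub hτmeas).indicator hK₂c.isClosed.measurableSet
  -- level sets of f
  have hflevel : ∀ t : ℝ, 0 < t → t < 1 →
      volume {y | t < f y} = ENNReal.ofReal ((1-t)^n) * volume X₂ := by
    intro t ht0 ht1
    set r := 1 - t with hrdef
    have hr0 : 0 < r := by rw [hrdef]; linarith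
    have hr1 : r ≤ 1 := by rw [hrdef]; linarith
    have hck0 : ∀ k : ℕ, 0 ≤ r - r/(k+1) := by
      intro k
      have h1 : r/(k+1) ≤ r := div_le_self hr0.le (show (1:ℝ) ≤ (k:ℝ)+1 by have := Nat.cast_nonneg (α:=ℝ) k; linarith)
      linarith
    have hckr : ∀ k : ℕ, r - r/(k+1) < r := by
      intro k
      have : 0 < r/(k+1) := by positivity
      linarith
    have hset : {y | t < f y} = ⋃ k : ℕ, (r - r/(k+1)) • K₂ := by
      ext y
      simp only [Set.mem_setOf_eq, Set.mem_iUnion]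
      constructor
      · intro hy
        have hyK : y ∈ K₂ := by
          by_contra hyK
          rw [hfdef, Set.indicator_of_notMem hyK] at hy
          linarith
        rw [hfdef, Set.indicator_of_mem hyK] at hy
        have hτr : τ y < r := by rw [hrdef]; linarith
        obtain ⟨k, hk⟩ := exists_nat_one_div_lt
          (show 0 < (r - τ y)/r from div_pos (by linarith) hr0)
        have h2 : r * (1/((k:ℝ)+1)) < r * ((r - τ y)/r) := by
          exact mul_lt_mul_of_pos_left hk hr0
        rw [mul_one_div, mul_div_cancel₀ _ hr0.ne'] at h2
        refine ⟨k, aux_smul_subset hK₂conv hK₂0 (hτnn y hyK) ?_ (hτmem y hyK).2⟩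
        linarith
      · rintro ⟨k, hy⟩
        have hyK : y ∈ K₂ := hmemK₂ ⟨hck0 k, by linarith [hckr k]⟩ hy
        have hτc : τ y ≤ r - r/(k+1) := hτle y _ ⟨⟨hck0 k, by linarith [hckr k]⟩, hy⟩
        rw [hfdef, Set.indicator_of_mem hyK]
        have := hckr k
        rw [hrdef] at *
        linarith
    rw [hset]
    have hmono : Monotone (fun k : ℕ => (r - r/(k+1)) • K₂) := by
      intro k l hkl
      apply aux_smul_subset hK₂conv hK₂0 (hck0 k)
      have h1 : r/((l:ℝ)+1) ≤ r/((k:ℝ)+1) :=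
        div_le_div_of_nonneg_left hr0.le (show (0:ℝ) < (k:ℝ)+1 by positivity)
          (show ((k:ℝ)+1 ≤ (l:ℝ)+1) by exact_mod_cast Nat.succ_le_succ hkl)
      linarith
    rw [hmono.measure_iUnion]
    have hvol_k : ∀ k : ℕ, volume ((r - r/(k+1)) • K₂)
        = ENNReal.ofReal ((r - r/(k+1))^n) * volume X₂ := by
      intro k
      rw [MeasureTheory.Measure.addHaar_smul_of_nonneg volume (hck0 k) K₂,
        finrank_euclideanSpace_fin, hvolK₂]
    simp only [hvol_k]
    apply le_antisymm
    · refine iSup_le fun k => ?_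
      refine mul_le_mul_left (ENNReal.ofReal_le_ofReal ?_) _
      exact pow_le_pow_left₀ (hck0 k) (by linarith [hckr k]) n
    · have h1 : Filter.Tendsto (fun k : ℕ => r - r/(k+1)) Filter.atTop (nhds r) := by
        have h0 : Filter.Tendsto (fun k : ℕ => 1 / ((k:ℝ) + 1)) Filter.atTop (nhds 0) :=
          tendsto_one_div_add_atTop_nhds_zero_nat
        have h2 : Filter.Tendsto (fun k : ℕ => r * (1/((k:ℝ)+1))) Filter.atTop
            (nhds (r * 0)) := h0.const_mul r
        simp only [mul_one_div, mul_zero] at h2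
        simpa using tendsto_const_nhds.sub h2
      have htend : Filter.Tendsto (fun k : ℕ => ENNReal.ofReal ((r - r/(k+1))^n) * volume X₂)
          Filter.atTop (nhds (ENNReal.ofReal (r^n) * volume X₂)) := by
        apply ENNReal.Tendsto.mul_const _ (Or.inr hv₂top)
        exact (ENNReal.continuous_ofReal.tendsto _).comp (h1.pow n)
      exact le_of_tendsto htend (Filter.Eventually.of_forall fun k =>
        le_iSup (fun k : ℕ => ENNReal.ofReal ((r - r/(k+1))^n) * volume X₂) k)
  -- Fubini
  have hfub : volume C = ∫⁻ y, volume ((fun x => (x, y)) ⁻¹' C) := by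
    rw [MeasureTheory.Measure.volume_eq_prod]
    exact MeasureTheory.Measure.prod_apply_symm hCcomp.measurableSet
  have hslicevol : ∀ y, volume ((fun x => (x, y)) ⁻¹' C)
      = ENNReal.ofReal (f y ^ m) * volume X₁ := by
    intro y
    rw [hslice y]
    by_cases hy : y ∈ K₂
    · rw [if_pos hy, MeasureTheory.Measure.addHaar_smul_of_nonneg volume
        (by linarith [hτ1 y hy] : (0:ℝ) ≤ 1 - τ y) K₁,
        finrank_euclideanSpace_fin, hvolK₁, hfdef, Set.indicator_of_mem hy]
    · rw [if_neg hy, hfdef, Set.indicator_of_notMem hy, measure_empty,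
        zero_pow hm.ne', ENNReal.ofReal_zero, zero_mul]
  -- layer cake
  set g : ℝ → ℝ := fun t => m * t^(m-1) with hgdef
  have hg_int : ∀ x : ℝ, ∫ t in (0:ℝ)..x, g t = x ^ m := by
    intro x
    rw [hgdef]
    rw [intervalIntegral.integral_const_mul, integral_pow]
    have h1 : m - 1 + 1 = m := Nat.sub_add_cancel hm
    rw [h1, zero_pow hm.ne', sub_zero]
    have h2 : ((m - 1 : ℕ):ℝ) + 1 = (m:ℝ) := by
      rw [Nat.cast_sub hm]; ring
    rw [h2]
    have h3 : (m:ℝ) ≠ 0 := by exact_mod_cast hm.ne'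
    field_simp
  have hlayer := lintegral_comp_eq_lintegral_meas_lt_mul volume
    (Filter.Eventually.of_forall hfnn) hfmeas.aemeasurable
    (fun t _ => ((continuous_const.fun_mul (continuous_pow (m-1))).intervalIntegrable 0 t))
    ((ae_restrict_iff' measurableSet_Ioi).2 (Filter.Eventually.of_forall
      fun t ht => by
        have h0t : (0:ℝ) < t := ht
        show (0:ℝ) ≤ m * t^(m-1)
        positivity))
  have hlayer' : ∫⁻ y, ENNReal.ofReal (f y ^ m)
      = ∫⁻ t in Set.Ioi (0:ℝ), volume {y | t < f y} * ENNReal.ofReal (g t) := by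
    rw [← hlayer]
    exact lintegral_congr fun y => by rw [hg_int]
  -- compute the one-dimensional integral
  have hdisj : Disjoint (Set.Ioo (0:ℝ) 1) (Set.Ici (1:ℝ)) :=
    Set.disjoint_left.2 fun t ht h1 => absurd ht.2 (not_lt.2 h1)
  have hsplit : ∫⁻ t in Set.Ioi (0:ℝ), volume {y | t < f y} * ENNReal.ofReal (g t)
      = (∫⁻ t in Set.Ioo (0:ℝ) 1, volume {y | t < f y} * ENNReal.ofReal (g t))
        + ∫⁻ t in Set.Ici (1:ℝ), volume {y | t < f y} * ENNReal.ofReal (g t) := by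
    rw [← Set.Ioo_union_Ici_eq_Ioi (zero_lt_one (α := ℝ))]
    exact lintegral_union measurableSet_Ici hdisj
  have hzero : ∫⁻ t in Set.Ici (1:ℝ), volume {y | t < f y} * ENNReal.ofReal (g t) = 0 := by
    have h1 : ∫⁻ t in Set.Ici (1:ℝ), volume {y | t < f y} * ENNReal.ofReal (g t)
        = ∫⁻ t in Set.Ici (1:ℝ), (0:ENNReal) := by
      apply setLIntegral_congr_fun measurableSet_Ici
      intro t ht
      dsimp only
      have hempty : {y | t < f y} = ∅ := by
        ext y
        simp only [Set.mem_setOf_eq, Set.mem_empty_iff_false, iff_false, not_lt]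
        exact (hfle1 y).trans ht
      rw [hempty, measure_empty, zero_mul]
    rw [h1, lintegral_zero]
  have hIoo : ∫⁻ t in Set.Ioo (0:ℝ) 1, volume {y | t < f y} * ENNReal.ofReal (g t)
      = ENNReal.ofReal (∫ t in (0:ℝ)..1, (1-t)^n * g t) * volume X₂ := by
    have h1 : ∫⁻ t in Set.Ioo (0:ℝ) 1, volume {y | t < f y} * ENNReal.ofReal (g t)
        = ∫⁻ t in Set.Ioo (0:ℝ) 1, ENNReal.ofReal ((1-t)^n * g t) * volume X₂ := by
      apply setLIntegral_congr_fun measurableSet_Ioo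
      intro t ht
      dsimp only
      rw [hflevel t ht.1 ht.2, ENNReal.ofReal_mul (pow_nonneg (by linarith [ht.2]) n)]
      ring
    rw [h1, lintegral_mul_const' _ _ hv₂top]
    congr 1
    have hGcont : Continuous (fun t : ℝ => (1-t)^n * g t) := by
      rw [hgdef]; fun_prop
    have hGint : IntegrableOn (fun t : ℝ => (1-t)^n * g t) (Set.Ioo (0:ℝ) 1) volume :=
      (hGcont.integrableOn_Icc (a := 0) (b := 1)).mono_set Set.Ioo_subset_Icc_self
    have hGnn : 0 ≤ᵐ[volume.restrict (Set.Ioo (0:ℝ) 1)] fun t : ℝ => (1-t)^n * g t := by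
      refine (ae_restrict_iff' measurableSet_Ioo).2 (Filter.Eventually.of_forall fun t ht => ?_)
      have h2 : (0:ℝ) ≤ 1 - t := by linarith [ht.2]
      have h3 : (0:ℝ) ≤ t := (ht.1).le
      exact mul_nonneg (pow_nonneg h2 n) (mul_nonneg (Nat.cast_nonneg m) (pow_nonneg h3 _))
    rw [← MeasureTheory.ofReal_integral_eq_lintegral_ofReal hGint hGnn]
    congr 1
    rw [← MeasureTheory.integral_Ioc_eq_integral_Ioo, ← intervalIntegral.integral_of_le zero_le_one]
  have hbeta : ∫ t in (0:ℝ)..1, (1-t)^n * g t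
      = (m.factorial * n.factorial : ℝ) / (m+n).factorial := by
    have h1 : ∫ t in (0:ℝ)..1, (1-t)^n * g t
        = m * ∫ t in (0:ℝ)..1, t^(m-1) * (1-t)^n := by
      rw [← intervalIntegral.integral_const_mul]
      apply intervalIntegral.integral_congr
      intro t _
      rw [hgdef]; ring
    rw [h1, aux_beta]
    have h2 : (m - 1) + n + 1 = m + n := by omega
    rw [h2]
    have h3 : (m : ℝ) * (m-1).factorial = m.factorial := by
      exact_mod_cast Nat.mul_factorial_pred hm.ne'
    rw [← h3]
    ring
  -- put everything together
  calc volume A = volume C := hvolAC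
    _ = ∫⁻ y, volume ((fun x => (x, y)) ⁻¹' C) := hfub
    _ = ∫⁻ y, ENNReal.ofReal (f y ^ m) * volume X₁ := lintegral_congr hslicevol
    _ = (∫⁻ y, ENNReal.ofReal (f y ^ m)) * volume X₁ := lintegral_mul_const' _ _ hv₁top
    _ = (ENNReal.ofReal ((m.factorial * n.factorial : ℝ) / (m+n).factorial) * volume X₂)
          * volume X₁ := by
        rw [hlayer', hsplit, hzero, add_zero, hIoo, hbeta]
    _ = ENNReal.ofReal ((m.factorial * n.factorial : ℝ) / (m+n).factorial)
          * volume X₁ * volume X₂ := by ring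




/-- Volume of the 1-product and ∞-product of convex domains containing the origin. -/
theorem volume_p_products
    (m n : ℕ)
    (X₁ Y₁ : Set (EuclideanSpace ℝ (Fin m))) (X₂ Y₂ : Set (EuclideanSpace ℝ (Fin n)))
    (hX₁ : Convex ℝ X₁) (hY₁ : Convex ℝ Y₁) (hX₂ : Convex ℝ X₂) (hY₂ : Convex ℝ Y₂)
    (hX₁b : Bornology.IsBounded X₁) (hY₁b : Bornology.IsBounded Y₁)
    (hX₂b : Bornology.IsBounded X₂) (hY₂b : Bornology.IsBounded Y₂)
    (hX₁i : (interior X₁).Nonempty) (hY₁i : (interior Y₁).Nonempty)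
    (hX₂i : (interior X₂).Nonempty) (hY₂i : (interior Y₂).Nonempty)
    (hX₁0 : 0 ∈ X₁) (hY₁0 : 0 ∈ Y₁) (hX₂0 : 0 ∈ X₂) (hY₂0 : 0 ∈ Y₂) :
    volume (⋃ t ∈ Set.Icc (0:ℝ) 1, ((1-t) • X₁) ×ˢ (t • X₂))
        = ENNReal.ofReal ((m.factorial * n.factorial : ℝ) / (m+n).factorial)
            * volume X₁ * volume X₂ ∧
      volume (Y₁ ×ˢ Y₂) = volume Y₁ * volume Y₂ := by
  refine ⟨?_, aux_vol_prod Y₁ Y₂⟩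
  rcases Nat.eq_zero_or_pos m with hm | hm
  · subst hm
    haveI : Subsingleton (EuclideanSpace ℝ (Fin 0)) := by
      infer_instance
    have hX₁u : X₁ = Set.univ := Set.eq_univ_of_forall fun x => by
      rwa [Subsingleton.elim x 0]
    have hunion : (⋃ t ∈ Set.Icc (0:ℝ) 1, ((1-t) • X₁) ×ˢ (t • X₂)) = X₁ ×ˢ X₂ := by
      ext ⟨x, y⟩
      simp only [Set.mem_iUnion, Set.mem_prod, exists_prop]
      constructor
      · rintro ⟨t, ht, hx, hy⟩
        refine ⟨hX₁u ▸ Set.mem_univ x, ?_⟩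
        obtain ⟨z, hz, rfl⟩ := hy
        exact hX₂.smul_mem_of_zero_mem hX₂0 hz ht
      · rintro ⟨hx, hy⟩
        exact ⟨1, ⟨zero_le_one, le_refl 1⟩, ⟨0, hX₁0, Subsingleton.elim _ _⟩,
          ⟨y, hy, one_smul ℝ y⟩⟩
    rw [hunion, aux_vol_prod]
    have hcoef : ((Nat.factorial 0 : ℝ) * n.factorial) / ((0+n).factorial) = 1 := by
      push_cast [Nat.factorial_zero, Nat.zero_add, one_mul]
      exact div_self (by exact_mod_cast (Nat.factorial_ne_zero n))
    rw [hcoef, ENNReal.ofReal_one]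
    ring
  · exact aux_main hm X₁ X₂ hX₁ hX₂ hX₁b hX₂b hX₁0 hX₂0
end

section
/- For the regular pentagon K inscribed in the unit circle with vertices v_k = (cos(2πk/5), sin(2πk/5)), and T its 90° rotation, the T°-length h_T(v_3 - v_0) + h_T(v_0 - v_3) of the diagonal 2-bounce trajectory satisfies (h_T(v_3-v_0)+h_T(v_0-v_3))² > 2·((5/2)sin(2π/5))², i.e., 4cos²(π/10)(1+cos(π/5))² > 2·(25/4)sin²(2π/5). -/
open Real

lemma hT_ge (u : ℝ × ℝ) (k : ℕ) (hk : k ≤ 4) : hT u ≥ dot u (wtx k) := by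
  interval_cases k <;> unfold hT <;>
    simp [le_max_iff, le_refl, true_or, or_true]

lemma cos_pi_add' (x : ℝ) : Real.cos (π + x) = - Real.cos x := by
  rw [Real.cos_add]; simp

lemma sin_pi_add' (x : ℝ) : Real.sin (π + x) = - Real.sin x := by
  rw [Real.sin_add]; simp

lemma dot4 : dot (vtx 3 - vtx 0) (wtx 4)
    = Real.cos (π/10) * (1 + Real.cos (π/5)) + Real.sin (π/5) * Real.sin (π/10) := by
  have h1 : 2*π*(3:ℕ)/5 = π + π/5 := by push_cast; ring
  have h2 : -(π/2) + 2*π*(4:ℕ)/5 = π + π/10 := by push_cast; ring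
  have h3 : 2*π*(0:ℕ)/5 = 0 := by push_cast; ring
  simp only [vtx, wtx, dot, h1, h2, h3, cos_pi_add', sin_pi_add', Real.cos_zero,
    Real.sin_zero, Prod.fst_sub, Prod.snd_sub]
  ring

lemma dot1 : dot (vtx 0 - vtx 3) (wtx 1)
    = Real.cos (π/10) * (1 + Real.cos (π/5)) - Real.sin (π/5) * Real.sin (π/10) := by
  have h1 : 2*π*(3:ℕ)/5 = π + π/5 := by push_cast; ring
  have h2 : -(π/2) + 2*π*(1:ℕ)/5 = -(π/10) := by push_cast; ring
  have h3 : 2*π*(0:ℕ)/5 = 0 := by push_cast; ring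
  simp only [vtx, wtx, dot, h1, h2, h3, cos_pi_add', sin_pi_add', Real.cos_zero,
    Real.sin_zero, Real.cos_neg, Real.sin_neg, Prod.fst_sub, Prod.snd_sub]
  have hcc : Real.cos (π/5) * Real.cos (π/10) + Real.sin (π/5) * Real.sin (π/10)
      = Real.cos (π/5 - π/10) := (Real.cos_sub _ _).symm
  ring

/-- The squared T°-length of the diagonal trajectory exceeds twice the squared
area of the pentagon: the core inequality disproving Viterbo's conjecture. -/
theorem diagonal_length_sq_gt :
    (hT (vtx 3 - vtx 0) + hT (vtx 0 - vtx 3))^2 > 2 * ((5/2) * Real.sin (2*π/5))^2 ∧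
    4 * (Real.cos (π/10))^2 * (1 + Real.cos (π/5))^2
      > 2 * (25/4) * (Real.sin (2*π/5))^2 := by
  have hpi := Real.pi_pos
  have hc5 : Real.cos (π/5) = (1 + √5) / 4 := Real.cos_pi_div_five
  have hs5 : Real.sqrt 5 ^ 2 = 5 := Real.sq_sqrt (by norm_num)
  have hs5' : (2:ℝ) < √5 := by nlinarith [Real.sqrt_nonneg 5]
  -- sin(2π/5) = cos(π/10)
  have hsin : Real.sin (2*π/5) = Real.cos (π/10) := by
    rw [show (2*π/5 : ℝ) = π/2 - π/10 by ring, Real.sin_pi_div_two_sub]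
  -- half angle: cos(π/5) = 2 cos²(π/10) - 1
  have hhalf : Real.cos (π/5) = 2 * Real.cos (π/10)^2 - 1 := by
    rw [show (π/5 : ℝ) = 2 * (π/10) by ring, Real.cos_two_mul]
  have hc10 : (0:ℝ) ≤ Real.cos (π/10) := by
    apply Real.cos_nonneg_of_mem_Icc
    constructor <;> [linarith; linarith]
  -- the key second inequality
  have key : 4 * (Real.cos (π/10))^2 * (1 + Real.cos (π/5))^2
      > 2 * (25/4) * (Real.sin (2*π/5))^2 := by
    rw [hsin]
    nlinarith [sq_nonneg (Real.cos (π/10)), hs5, hs5', hhalf, hc5]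
  refine ⟨?_, key⟩
  have h4 := hT_ge (vtx 3 - vtx 0) 4 (by norm_num)
  have h1 := hT_ge (vtx 0 - vtx 3) 1 (by norm_num)
  rw [dot4] at h4
  rw [dot1] at h1
  have hsum : hT (vtx 3 - vtx 0) + hT (vtx 0 - vtx 3)
      ≥ 2 * (Real.cos (π/10) * (1 + Real.cos (π/5))) := by linarith
  have hpos : (0:ℝ) ≤ 2 * (Real.cos (π/10) * (1 + Real.cos (π/5))) := by
    have : (0:ℝ) ≤ 1 + Real.cos (π/5) := by rw [hc5]; positivity
    positivity
  calc (hT (vtx 3 - vtx 0) + hT (vtx 0 - vtx 3))^2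
      ≥ (2 * (Real.cos (π/10) * (1 + Real.cos (π/5))))^2 := by
        apply pow_le_pow_left₀ hpos hsum
    _ = 4 * (Real.cos (π/10))^2 * (1 + Real.cos (π/5))^2 := by ring
    _ > 2 * ((5/2) * Real.sin (2*π/5))^2 := by nlinarith [key]
end
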